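/- Let N ≥ 2 be an even natural number and let m*_N = M_N(θ*_N). Then for every real s with 1 < s ≤ m*_N there exists θ ∈ 𝒢 such that M_N(θ) = s. (For every MABK value s in the range (1, m*_N] there is a self-testable strategy from the one-parameter GHZ family achieving it.) -/
import Mathlib


open Real

/-- The set `𝒢 = (π/4, π/2) ∪ (π/2, 3π/4) ∪ (5π/4, 3π/2) ∪ (3π/2, 7π/4)`. -/
noncomputable def Gset : Set ℝ :=
  Set.Ioo (π / 4) (π / 2) ∪ Set.Ioo (π / 2) (3 * π / 4)
    ∪ Set.Ioo (5 * π / 4) (3 * π / 2) ∪ Set.Ioo (3 * π / 2) (7 * π / 4)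

/-- The MABK value `M_N(θ)` of the one-parameter symmetric GHZ strategy. -/
noncomputable def MABK (N : ℕ) (θ : ℝ) : ℝ :=
  (2 : ℝ) ^ (((N : ℝ) - 1) / 2) *
    (cos (θ / 2 + π / 4) ^ N * sin ((N : ℝ) * θ / 2 + π / 4)
      + cos (θ / 2 - π / 4) ^ N * sin ((N : ℝ) * θ / 2 - π / 4))

/-- The value `t_N` defined, for even `N`, according to `N mod 8`. -/
noncomputable def tval (N : ℕ) : ℝ :=
  if N % 8 = 2 then (N : ℝ) / 4 + 1 / 2
  else if N % 8 = 4 then (N : ℝ) / 4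
  else if N % 8 = 6 then 3 * (N : ℝ) / 4 + 1 / 2
  else 3 * (N : ℝ) / 4 + 1

/-- The angle `θ*_N = 2π t_N/(N+1)`. -/
noncomputable def thetaStar (N : ℕ) : ℝ := 2 * π * tval N / ((N : ℝ) + 1)

lemma mabk_cont (N : ℕ) : Continuous (MABK N) := by unfold MABK; fun_prop

/-- IVT helper: `a` may be an endpoint of `[l,u]`, `b` is interior. -/
lemma key {f : ℝ → ℝ} (hf : Continuous f) {l u a b s : ℝ}
    (ha1 : l ≤ a) (ha2 : a ≤ u) (hb : b ∈ Set.Ioo l u)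
    (hfa : f a < s) (hfb : s ≤ f b) : ∃ θ ∈ Set.Ioo l u, f θ = s := by
  have hs : s ∈ Set.uIcc (f a) (f b) := Set.mem_uIcc.2 (Or.inl ⟨le_of_lt hfa, hfb⟩)
  obtain ⟨θ, hθ, hfθ⟩ := intermediate_value_uIcc hf.continuousOn hs
  refine ⟨θ, ?_, hfθ⟩
  have hne : θ ≠ a := by rintro rfl; linarith
  rcases le_total a b with h | h
  · rw [Set.uIcc_of_le h] at hθ
    exact ⟨lt_of_le_of_lt ha1 (lt_of_le_of_ne hθ.1 (Ne.symm hne)), lt_of_le_of_lt hθ.2 hb.2⟩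
  · rw [Set.uIcc_of_ge h] at hθ
    exact ⟨lt_of_lt_of_le hb.1 hθ.1, lt_of_lt_of_le (lt_of_le_of_ne hθ.2 hne) ha2⟩

/-- IVT helper: `b` may be an endpoint, `a` is interior; needs strict `s < f b`. -/
lemma key' {f : ℝ → ℝ} (hf : Continuous f) {l u a b s : ℝ}
    (hb1 : l ≤ b) (hb2 : b ≤ u) (ha : a ∈ Set.Ioo l u)
    (hfa : f a < s) (hfb : s < f b) : ∃ θ ∈ Set.Ioo l u, f θ = s := by
  obtain ⟨θ, hθ, hfθ⟩ := key (f := fun x => -f x) (s := -s) (hf.neg) hb1 hb2 ha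
    (by simpa using hfb) (by simpa using le_of_lt hfa)
  exact ⟨θ, hθ, by simpa using congrArg Neg.neg hfθ⟩

lemma cos_abs_le {x : ℝ} (h1 : 3 * π / 8 ≤ x) (h2 : x ≤ 5 * π / 8) : |cos x| ≤ 1 / 2 := by
  have hπ := pi_pos
  rw [abs_le]
  constructor
  · have h3 : cos (π - π / 3) ≤ cos x :=
      Real.cos_le_cos_of_nonneg_of_le_pi (by linarith) (by linarith) (by linarith)
    rw [Real.cos_pi_sub, Real.cos_pi_div_three] at h3
    linarith
  · have h3 : cos x ≤ cos (π / 3) :=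
      Real.cos_le_cos_of_nonneg_of_le_pi (by linarith) (by linarith) (by linarith)
    rw [Real.cos_pi_div_three] at h3
    linarith

lemma rpow_half_lt_one (N : ℕ) : (2:ℝ) ^ (((N:ℝ) - 1) / 2) * (1/2) ^ N < 1 := by
  have h1 : ((1:ℝ)/2) ^ N = (2:ℝ) ^ (-(N:ℝ)) := by
    rw [one_div, inv_pow, ← Real.rpow_natCast (2:ℝ) N, ← Real.rpow_neg (by norm_num)]
  rw [h1, ← Real.rpow_add (by norm_num)]
  apply Real.rpow_lt_one_of_one_lt_of_neg (by norm_num)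
  have : (0:ℝ) ≤ (N:ℝ) := Nat.cast_nonneg N
  linarith

/-- If the `-` sine vanishes and the `+` cosine is small, the MABK value is `< 1`. -/
lemma killed_minus {N : ℕ} {θ : ℝ} (h0 : sin ((N : ℝ) * θ / 2 - π / 4) = 0)
    (hc : |cos (θ / 2 + π / 4)| ≤ 1 / 2) : MABK N θ < 1 := by
  unfold MABK
  rw [h0, mul_zero, add_zero]
  have hb : |cos (θ / 2 + π / 4) ^ N * sin ((N : ℝ) * θ / 2 + π / 4)| ≤ (1/2) ^ N := by
    rw [abs_mul, abs_pow]
    calc |cos (θ / 2 + π / 4)| ^ N * |sin ((N : ℝ) * θ / 2 + π / 4)|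
        ≤ (1/2) ^ N * 1 := by
          apply mul_le_mul (pow_le_pow_left₀ (abs_nonneg _) hc N)
            (abs_sin_le_one _) (abs_nonneg _) (by positivity)
      _ = (1/2) ^ N := mul_one _
  calc (2:ℝ) ^ (((N:ℝ) - 1) / 2) * (cos (θ / 2 + π / 4) ^ N * sin ((N : ℝ) * θ / 2 + π / 4))
      ≤ (2:ℝ) ^ (((N:ℝ) - 1) / 2) * (1/2) ^ N := by
        apply mul_le_mul_of_nonneg_left (le_trans (le_abs_self _) hb) (le_of_lt (by positivity))
    _ < 1 := rpow_half_lt_one N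

/-- If the `+` sine vanishes and the `-` cosine is small, the MABK value is `< 1`. -/
lemma killed_plus {N : ℕ} {θ : ℝ} (h0 : sin ((N : ℝ) * θ / 2 + π / 4) = 0)
    (hc : |cos (θ / 2 - π / 4)| ≤ 1 / 2) : MABK N θ < 1 := by
  unfold MABK
  rw [h0, mul_zero, zero_add]
  have hb : |cos (θ / 2 - π / 4) ^ N * sin ((N : ℝ) * θ / 2 - π / 4)| ≤ (1/2) ^ N := by
    rw [abs_mul, abs_pow]
    calc |cos (θ / 2 - π / 4)| ^ N * |sin ((N : ℝ) * θ / 2 - π / 4)|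
        ≤ (1/2) ^ N * 1 := by
          apply mul_le_mul (pow_le_pow_left₀ (abs_nonneg _) hc N)
            (abs_sin_le_one _) (abs_nonneg _) (by positivity)
      _ = (1/2) ^ N := mul_one _
  calc (2:ℝ) ^ (((N:ℝ) - 1) / 2) * (cos (θ / 2 - π / 4) ^ N * sin ((N : ℝ) * θ / 2 - π / 4))
      ≤ (2:ℝ) ^ (((N:ℝ) - 1) / 2) * (1/2) ^ N := by
        apply mul_le_mul_of_nonneg_left (le_trans (le_abs_self _) hb) (le_of_lt (by positivity))
    _ < 1 := rpow_half_lt_one N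

lemma sqrt_two_sq : (Real.sqrt 2) ^ 2 = 2 := Real.sq_sqrt (by norm_num)

lemma mabk_two : MABK 2 (π/2) = 1 := by
  unfold MABK
  have e1 : π/2/2 + π/4 = π/2 := by ring
  have e2 : π/2/2 - π/4 = 0 := by ring
  have e3 : ((2:ℕ):ℝ) * (π/2)/2 - π/4 = π/4 := by push_cast; ring
  rw [e1, e2, e3, Real.cos_pi_div_two, Real.cos_zero, Real.sin_pi_div_four]
  have e4 : (((2:ℕ):ℝ) - 1)/2 = 1/2 := by norm_num
  rw [e4, ← Real.sqrt_eq_rpow]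
  norm_num
  nlinarith [sqrt_two_sq, Real.sqrt_nonneg 2]

lemma mabk_four_half : MABK 4 (π/2) = 2 := by
  unfold MABK
  have e1 : π/2/2 + π/4 = π/2 := by ring
  have e2 : π/2/2 - π/4 = 0 := by ring
  have e3 : ((4:ℕ):ℝ) * (π/2)/2 - π/4 = π - π/4 := by push_cast; ring
  rw [e1, e2, e3, Real.cos_pi_div_two, Real.cos_zero, Real.sin_pi_sub, Real.sin_pi_div_four]
  have e4 : (((4:ℕ):ℝ) - 1)/2 = 1 + 1/2 := by norm_num
  rw [e4, Real.rpow_add (by norm_num), Real.rpow_one, ← Real.sqrt_eq_rpow]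
  norm_num
  nlinarith [sqrt_two_sq, Real.sqrt_nonneg 2]

lemma mabk_four_quarter : MABK 4 (π/4) = 3/2 := by
  unfold MABK
  have e1 : π/4/2 + π/4 = π/2 - π/8 := by ring
  have e2 : π/4/2 - π/4 = -(π/8) := by ring
  have e3 : ((4:ℕ):ℝ) * (π/4)/2 + π/4 = π - π/4 := by push_cast; ring
  have e4 : ((4:ℕ):ℝ) * (π/4)/2 - π/4 = π/4 := by push_cast; ring
  rw [e1, e2, e3, e4, Real.cos_pi_div_two_sub, Real.cos_neg, Real.sin_pi_sub,
    Real.sin_pi_div_four]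
  have e5 : (((4:ℕ):ℝ) - 1)/2 = 1 + 1/2 := by norm_num
  rw [e5, Real.rpow_add (by norm_num), Real.rpow_one, ← Real.sqrt_eq_rpow]
  have hsc : sin (π/8) * cos (π/8) = Real.sqrt 2 / 4 := by
    have h2m := Real.sin_two_mul (π/8)
    rw [show 2*(π/8) = π/4 by ring, Real.sin_pi_div_four] at h2m
    linarith
  have hpy := Real.sin_sq_add_cos_sq (π/8)
  have hkey : sin (π/8)^4 + cos (π/8)^4 = 3/4 := by
    linear_combination (sin (π/8)^2 + cos (π/8)^2 + 1) * hpy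
      - 2 * (sin (π/8) * cos (π/8) + Real.sqrt 2/4) * hsc - (1/8) * sqrt_two_sq
  linear_combination (Real.sqrt 2)^2 * hkey + (3/4) * sqrt_two_sq

set_option maxHeartbeats 1000000 in
/-- Proposition 4: for even `N ≥ 2` and every MABK value `s ∈ (1, m*_N]`, where
`m*_N = M_N(θ*_N)`, there exists `θ ∈ 𝒢` with `M_N(θ) = s`. -/
theorem mabk_range_even (N : ℕ) (hN : 2 ≤ N) (hNeven : N % 2 = 0)
    (s : ℝ) (hs1 : 1 < s) (hs2 : s ≤ MABK N (thetaStar N)) :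
    ∃ θ ∈ Gset, MABK N θ = s := by
  have hπ := Real.pi_pos
  have hf := mabk_cont N
  have gA : Set.Ioo (π/4) (π/2) ⊆ Gset := fun x hx => Or.inl (Or.inl (Or.inl hx))
  have gB : Set.Ioo (π/2) (3*π/4) ⊆ Gset := fun x hx => Or.inl (Or.inl (Or.inr hx))
  have gC : Set.Ioo (5*π/4) (3*π/2) ⊆ Gset := fun x hx => Or.inl (Or.inr hx)
  have gD : Set.Ioo (3*π/2) (7*π/4) ⊆ Gset := fun x hx => Or.inr hx
  have hN1 : (0:ℝ) < (N:ℝ) + 1 := by positivity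
  have hN2 : (2:ℝ) ≤ (N:ℝ) := by exact_mod_cast hN
  have hπN2 : π * 2 ≤ π * (N:ℝ) := mul_le_mul_of_nonneg_left hN2 (le_of_lt hπ)
  rcases (by omega : N % 8 = 2 ∨ N % 8 = 4 ∨ N % 8 = 6 ∨ N % 8 = 0) with h8 | h8 | h8 | h8
  · -- N ≡ 2 (mod 8)
    have ht : tval N = (N:ℝ)/4 + 1/2 := by rw [tval, if_pos h8]
    have hθs : thetaStar N ∈ Set.Ioo (π/2) (3*π/4) := by
      rw [thetaStar, ht]
      constructor
      · rw [lt_div_iff₀ hN1]; linarith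
      · rw [div_lt_iff₀ hN1]; linarith
    rcases (by omega : N = 2 ∨ 10 ≤ N) with rfl | hN10
    · obtain ⟨θ, hθ, hv⟩ := key hf (le_refl (π/2)) (by linarith : π/2 ≤ 3*π/4) hθs
        (by rw [mabk_two]; exact hs1) hs2
      exact ⟨θ, gB hθ, hv⟩
    · obtain ⟨k, rfl⟩ : ∃ k, N = 8*k+2 := ⟨N/8, by omega⟩
      have hkR : (1:ℝ) ≤ (k:ℝ) := by exact_mod_cast (by omega : 1 ≤ k)
      have hπk : π * 1 ≤ π * (k:ℝ) := mul_le_mul_of_nonneg_left hkR (le_of_lt hπ)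
      have hden : (0:ℝ) < 16*(k:ℝ)+4 := by positivity
      obtain ⟨a, ha_def⟩ : ∃ a : ℝ, a = (8*(k:ℝ)+5)*π/(16*(k:ℝ)+4) := ⟨_, rfl⟩
      have haI : a ∈ Set.Ioo (π/2) (3*π/4) := by
        rw [ha_def]
        constructor
        · rw [lt_div_iff₀ hden]; linarith
        · rw [div_lt_iff₀ hden]; linarith
      have hkill : sin (((8*k+2:ℕ):ℝ) * a / 2 - π/4) = 0 := by
        have e : ((8*k+2:ℕ):ℝ) * a / 2 - π/4 = ((2*k+1:ℕ):ℝ) * π := by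
          rw [ha_def]; push_cast; field_simp; ring
        rw [e]; exact Real.sin_nat_mul_pi _
      have hcb : |cos (a/2 + π/4)| ≤ 1/2 :=
        cos_abs_le (by linarith [haI.1]) (by linarith [haI.2])
      obtain ⟨θ, hθ, hv⟩ := key hf (le_of_lt haI.1) (le_of_lt haI.2) hθs
        (lt_trans (killed_minus hkill hcb) hs1) hs2
      exact ⟨θ, gB hθ, hv⟩
  · -- N ≡ 4 (mod 8)
    have ht : tval N = (N:ℝ)/4 := by rw [tval, if_neg (by omega), if_pos h8]
    have hθs : thetaStar N ∈ Set.Ioo (π/4) (π/2) := by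
      rw [thetaStar, ht]
      constructor
      · rw [lt_div_iff₀ hN1]; linarith
      · rw [div_lt_iff₀ hN1]; linarith
    rcases (by omega : N = 4 ∨ 12 ≤ N) with rfl | hN12
    · by_cases hs3 : 3/2 < s
      · obtain ⟨θ, hθ, hv⟩ := key hf (le_refl (π/4)) (by linarith : π/4 ≤ π/2) hθs
          (by rw [mabk_four_quarter]; exact hs3) hs2
        exact ⟨θ, gA hθ, hv⟩
      · have h58 : (5*π/8) ∈ Set.Ioo (π/2) (3*π/4) := by constructor <;> linarith
        have hkill : sin (((4:ℕ):ℝ) * (5*π/8) / 2 - π/4) = 0 := by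
          rw [show ((4:ℕ):ℝ) * (5*π/8) / 2 - π/4 = π by push_cast; ring]
          exact Real.sin_pi
        have hcb : |cos ((5*π/8)/2 + π/4)| ≤ 1/2 :=
          cos_abs_le (by linarith) (by linarith)
        obtain ⟨θ, hθ, hv⟩ := key' hf (le_refl (π/2)) (by linarith : π/2 ≤ 3*π/4) h58
          (lt_trans (killed_minus hkill hcb) hs1)
          (by rw [mabk_four_half]; linarith)
        exact ⟨θ, gB hθ, hv⟩
    · obtain ⟨k, rfl⟩ : ∃ k, N = 8*k+4 := ⟨N/8, by omega⟩
      have hkR : (1:ℝ) ≤ (k:ℝ) := by exact_mod_cast (by omega : 1 ≤ k)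
      have hπk : π * 1 ≤ π * (k:ℝ) := mul_le_mul_of_nonneg_left hkR (le_of_lt hπ)
      have hden : (0:ℝ) < 16*(k:ℝ)+8 := by positivity
      obtain ⟨a, ha_def⟩ : ∃ a : ℝ, a = (4*(k:ℝ)+5)*π/(16*(k:ℝ)+8) := ⟨_, rfl⟩
      have haI : a ∈ Set.Ioo (π/4) (π/2) := by
        rw [ha_def]
        constructor
        · rw [lt_div_iff₀ hden]; linarith
        · rw [div_lt_iff₀ hden]; linarith
      have hkill : sin (((8*k+4:ℕ):ℝ) * a / 2 - π/4) = 0 := by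
        have e : ((8*k+4:ℕ):ℝ) * a / 2 - π/4 = ((k+1:ℕ):ℝ) * π := by
          rw [ha_def]; push_cast; field_simp; ring
        rw [e]; exact Real.sin_nat_mul_pi _
      have hcb : |cos (a/2 + π/4)| ≤ 1/2 :=
        cos_abs_le (by linarith [haI.1]) (by linarith [haI.2])
      obtain ⟨θ, hθ, hv⟩ := key hf (le_of_lt haI.1) (le_of_lt haI.2) hθs
        (lt_trans (killed_minus hkill hcb) hs1) hs2
      exact ⟨θ, gA hθ, hv⟩
  · -- N ≡ 6 (mod 8)
    have ht : tval N = 3*(N:ℝ)/4 + 1/2 := by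
      rw [tval, if_neg (by omega), if_neg (by omega), if_pos h8]
    have hθs : thetaStar N ∈ Set.Ioo (5*π/4) (3*π/2) := by
      rw [thetaStar, ht]
      constructor
      · rw [lt_div_iff₀ hN1]; linarith
      · rw [div_lt_iff₀ hN1]; linarith
    obtain ⟨k, rfl⟩ : ∃ k, N = 8*k+6 := ⟨N/8, by omega⟩
    have hkill : sin (((8*k+6:ℕ):ℝ) * (5*π/4) / 2 + π/4) = 0 := by
      have e : ((8*k+6:ℕ):ℝ) * (5*π/4) / 2 + π/4 = ((5*k+4:ℕ):ℝ) * π := by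
        push_cast; ring
      rw [e]; exact Real.sin_nat_mul_pi _
    have hcb : |cos ((5*π/4)/2 - π/4)| ≤ 1/2 :=
      cos_abs_le (by linarith) (by linarith)
    obtain ⟨θ, hθ, hv⟩ := key hf (le_refl (5*π/4)) (by linarith : 5*π/4 ≤ 3*π/2) hθs
      (lt_trans (killed_plus hkill hcb) hs1) hs2
    exact ⟨θ, gC hθ, hv⟩
  · -- N ≡ 0 (mod 8)
    have ht : tval N = 3*(N:ℝ)/4 + 1 := by
      rw [tval, if_neg (by omega), if_neg (by omega), if_neg (by omega)]
    have hθs : thetaStar N ∈ Set.Ioo (3*π/2) (7*π/4) := by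
      rw [thetaStar, ht]
      constructor
      · rw [lt_div_iff₀ hN1]; linarith
      · rw [div_lt_iff₀ hN1]; linarith
    obtain ⟨k, rfl⟩ : ∃ k, N = 8*k := ⟨N/8, by omega⟩
    have hkR : (1:ℝ) ≤ (k:ℝ) := by exact_mod_cast (by omega : 1 ≤ k)
    have hπk : π * 1 ≤ π * (k:ℝ) := mul_le_mul_of_nonneg_left hkR (le_of_lt hπ)
    have hden : (0:ℝ) < 16*(k:ℝ) := by positivity
    obtain ⟨a, ha_def⟩ : ∃ a : ℝ, a = (24*(k:ℝ)+3)*π/(16*(k:ℝ)) := ⟨_, rfl⟩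
    have haI : a ∈ Set.Ioo (3*π/2) (7*π/4) := by
      rw [ha_def]
      constructor
      · rw [lt_div_iff₀ hden]; linarith
      · rw [div_lt_iff₀ hden]; linarith
    have hkill : sin (((8*k:ℕ):ℝ) * a / 2 + π/4) = 0 := by
      have e : ((8*k:ℕ):ℝ) * a / 2 + π/4 = ((6*k+1:ℕ):ℝ) * π := by
        rw [ha_def]; push_cast
        have hk0 : (k:ℝ) ≠ 0 := by positivity
        field_simp; ring
      rw [e]; exact Real.sin_nat_mul_pi _
    have hcb : |cos (a/2 - π/4)| ≤ 1/2 :=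
      cos_abs_le (by linarith [haI.1]) (by linarith [haI.2])
    obtain ⟨θ, hθ, hv⟩ := key hf (le_of_lt haI.1) (le_of_lt haI.2) hθs
      (lt_trans (killed_plus hkill hcb) hs1) hs2
    exact ⟨θ, gD hθ, hv⟩
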